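/- arXiv:1501.04814 — 2 statements merged into one kernel-verified Lean document; each statement's English description precedes it below -/
import Mathlib

section
/- Countable stability characterizes the packing dimension of a measure: Let r ∈ [1,∞) and let μ be a Borel probability measure on ℝ^q with compact support. Then dim_P^*(μ) = inf { sup_{i∈ℕ} D̄_r(μ_i) : μ = Σ_{i∈ℕ} s_i μ_i with s_i > 0 and each μ_i a compactly supported Borel probability measure on ℝ^q }. -/
open MeasureTheory Filter Metric
open scoped ENNReal NNReal

/-- The `n`-th quantization error of order `r` for a measure `P`:
`e_{n,r}(P) = inf { (∫ d(x,α)^r dP)^{1/r} : α ⊆ E, 1 ≤ card α ≤ n }`. -/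
noncomputable def quantError {E : Type*} [MetricSpace E] [MeasurableSpace E]
    (P : Measure E) (r : ℝ) (n : ℕ) : ℝ :=
  sInf {e : ℝ | ∃ α : Finset E, 1 ≤ α.card ∧ α.card ≤ n ∧
    e = (∫ x, infDist x (↑α : Set E) ^ r ∂P) ^ (1 / r)}

/-- The upper quantization dimension of order `r`. -/
noncomputable def upperQuantDim {E : Type*} [MetricSpace E] [MeasurableSpace E]
    (P : Measure E) (r : ℝ) : ℝ :=
  limsup (fun n : ℕ => Real.log n / (- Real.log (quantError P r n))) atTop

/-- The lower quantization dimension of order `r`. -/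
noncomputable def lowerQuantDim {E : Type*} [MetricSpace E] [MeasurableSpace E]
    (P : Measure E) (r : ℝ) : ℝ :=
  liminf (fun n : ℕ => Real.log n / (- Real.log (quantError P r n))) atTop

/-- The `s`-dimensional upper quantization coefficient of order `r`. -/
noncomputable def upperQuantCoeff {E : Type*} [MetricSpace E] [MeasurableSpace E]
    (P : Measure E) (r s : ℝ) : ℝ≥0∞ :=
  limsup (fun n : ℕ => ENNReal.ofReal ((n : ℝ) ^ (1 / s) * quantError P r n)) atTop

/-- The `s`-dimensional lower quantization coefficient of order `r`. -/
noncomputable def lowerQuantCoeff {E : Type*} [MetricSpace E] [MeasurableSpace E]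
    (P : Measure E) (r s : ℝ) : ℝ≥0∞ :=
  liminf (fun n : ℕ => ENNReal.ofReal ((n : ℝ) ^ (1 / s) * quantError P r n)) atTop

/-- The upper quantization dimension of order `r`, as an extended nonnegative real. -/
noncomputable def upperQuantDimE {E : Type*} [MetricSpace E] [MeasurableSpace E]
    (P : Measure E) (r : ℝ) : ℝ≥0∞ :=
  limsup (fun n : ℕ => ENNReal.ofReal (Real.log n / (- Real.log (quantError P r n)))) atTop

/-- `N(A,ε)`: the minimal number of closed balls of radius `ε` needed to cover `A`. -/
noncomputable def coverNum {E : Type*} [MetricSpace E] (A : Set E) (ε : ℝ) : ℕ :=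
  sInf {n : ℕ | ∃ t : Finset E, t.card ≤ n ∧ A ⊆ ⋃ x ∈ t, closedBall x ε}

/-- The upper box dimension `limsup_{ε→0⁺} log N(A,ε)/(-log ε)`, as an extended
nonnegative real. -/
noncomputable def upperBoxDimE {E : Type*} [MetricSpace E] (A : Set E) : ℝ≥0∞ :=
  limsup (fun ε : ℝ => ENNReal.ofReal (Real.log (coverNum A ε) / (- Real.log ε)))
    (nhdsWithin 0 (Set.Ioi 0))

/-- The packing dimension of a set:
`dim_P E = inf { sup_i upperBoxDim (A i) : E ⊆ ⋃ i A i, each A i bounded }`. -/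
noncomputable def packingDim {E : Type*} [MetricSpace E] (F : Set E) : ℝ≥0∞ :=
  sInf {d : ℝ≥0∞ | ∃ A : ℕ → Set E, (∀ i, Bornology.IsBounded (A i)) ∧
    F ⊆ ⋃ i, A i ∧ d = ⨆ i, upperBoxDimE (A i)}

/-- The packing dimension of a measure: `dim_P^* μ = inf { dim_P A : A Borel, μ(A) = 1 }`. -/
noncomputable def packingDimMeasure {E : Type*} [MetricSpace E] [MeasurableSpace E]
    (μ : Measure E) : ℝ≥0∞ :=
  sInf {d : ℝ≥0∞ | ∃ A : Set E, MeasurableSet A ∧ μ A = 1 ∧ d = packingDim A}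

/-!
`≤`: if `D̄_r(ν) < c < d` for a compactly supported `ν`, there are codebooks `α k` of size `2 ^ k`
with quantization error `< 2 ^ (-k/c)`. By Markov's inequality and Borel–Cantelli, `ν`-almost
every point lies eventually within `2 ^ (-k/d)` of `α k`, so `ν` is carried by countably many
sets of upper box dimension `≤ d`. Hence `dim_P^* ν ≤ D̄_r(ν)`, and for `μ = Σ sᵢ νᵢ` countable
stability of `dim_P` gives `dim_P^* μ ≤ sup dim_P^* νᵢ`.

`≥`: if `μ A = 1` and `A ⊆ ⋃ Bᵢ` with `Bᵢ` bounded, normalising `μ` on the disjointed pieces of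
`A ∩ closure Bᵢ` decomposes `μ` into pieces whose `D̄_r` is at most the upper box dimension of
`Bᵢ`, because a cover of a carrier by `N(K, ε)` balls is a codebook with error `≤ ε`. Pieces of
measure zero are discarded after splitting every piece into copies with weights `2 ^ (-(j+1))`,
which leaves infinitely many.
-/

open Topology Real Bornology ProbabilityTheory

section Covering

variable {X : Type*} [MetricSpace X]

lemma coverNum_le_card {F : Set X} {ε : ℝ} {t : Finset X} (h : F ⊆ ⋃ x ∈ t, closedBall x ε) :
    coverNum F ε ≤ t.card :=
  Nat.sInf_le ⟨t, le_rfl, h⟩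

lemma TotallyBounded.exists_cover_card_le_coverNum {K : Set X} (hK : TotallyBounded K) {ε : ℝ}
    (hε : 0 < ε) : ∃ t : Finset X, t.card ≤ coverNum K ε ∧ K ⊆ ⋃ x ∈ t, closedBall x ε := by
  obtain ⟨s, hs, hKs⟩ := totallyBounded_iff.mp hK ε hε
  have hne : {n | ∃ t : Finset X, t.card ≤ n ∧ K ⊆ ⋃ x ∈ t, closedBall x ε}.Nonempty :=
    ⟨_, hs.toFinset, le_rfl, hKs.trans <| by
      simpa using Set.iUnion₂_mono fun x _ => ball_subset_closedBall⟩
  exact Nat.sInf_mem hne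

lemma coverNum_closure (A : Set X) (ε : ℝ) : coverNum (closure A) ε = coverNum A ε := by
  have hcover : ∀ t : Finset X,
      closure A ⊆ ⋃ x ∈ t, closedBall x ε ↔ A ⊆ ⋃ x ∈ t, closedBall x ε := fun t =>
    ⟨subset_closure.trans, fun h => (t.finite_toSet.isClosed_biUnion fun _ _ =>
      isClosed_closedBall).closure_subset_iff.mpr h⟩
  simp only [coverNum, hcover]

lemma mem_iUnion_closedBall_of_infDist_le {α : Finset X} (hα : α.Nonempty) {x : X} {R : ℝ}
    (h : infDist x (α : Set X) ≤ R) : x ∈ ⋃ y ∈ α, closedBall y R := by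
  obtain ⟨y, hy, hxy⟩ := α.finite_toSet.isCompact.exists_infDist_eq_dist (by simpa) x
  exact Set.mem_iUnion₂.mpr ⟨y, hy, by rw [mem_closedBall]; linarith⟩

lemma upperBoxDimE_closure (A : Set X) : upperBoxDimE (closure A) = upperBoxDimE A := by
  simp only [upperBoxDimE, coverNum_closure]

lemma eventually_coverNum_le_rpow_of_upperBoxDimE_lt {F : Set X} {c : ℝ} (hc : 0 < c)
    (h : upperBoxDimE F < ENNReal.ofReal c) :
    ∀ᶠ ε in 𝓝[>] 0, (coverNum F ε : ℝ) ≤ ε ^ (-c) := by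
  filter_upwards [eventually_lt_of_limsup_lt h, Ioo_mem_nhdsGT one_pos] with ε hε ⟨hε0, hε1⟩
  have hlog : 0 < -log ε := neg_pos.mpr (log_neg hε0 hε1)
  rw [ENNReal.ofReal_lt_ofReal_iff hc, div_lt_iff₀ hlog] at hε
  rcases (coverNum F ε).eq_zero_or_pos with hN | hN
  · rw [hN, Nat.cast_zero]
    positivity
  · rw [← log_le_log_iff (by exact_mod_cast hN) (by positivity), log_rpow hε0]
    linarith

/-- With `m = ⌈-log ε / (β log 2)⌉` the cover at scale `(2 ^ m) ^ (-β) ≤ ε` uses `2 ^ m` balls;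
rounding `m` up costs the term `log 2 / -log ε`. -/
lemma log_coverNum_div_le_of_covers {F : Set X} {β : ℝ} (hβ : 0 < β) {k₀ : ℕ}
    (h : ∀ k ≥ k₀, ∃ t : Finset X, t.card ≤ 2 ^ k ∧
      F ⊆ ⋃ x ∈ t, closedBall x (((2 : ℝ) ^ k) ^ (-β)))
    {ε : ℝ} (hε0 : 0 < ε) (hε1 : ε < 1) (hεk₀ : k₀ * (β * log 2) ≤ -log ε) :
    log (coverNum F ε) / -log ε ≤ β⁻¹ + log 2 / -log ε := by
  have hlog2 : 0 < log 2 := log_pos one_lt_two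
  have hlogε : 0 < -log ε := neg_pos.mpr (log_neg hε0 hε1)
  have hlogε' : log ε ≠ 0 := (log_neg hε0 hε1).ne
  set L := -log ε / (β * log 2)
  set m := ⌈L⌉₊
  have hk₀m : k₀ ≤ m := by
    rw [← Nat.cast_le (α := ℝ)]
    exact (le_div_iff₀ (by positivity)).mpr hεk₀ |>.trans (Nat.le_ceil L)
  have hradius : ((2 : ℝ) ^ m) ^ (-β) ≤ ε := by
    rw [← log_le_log_iff (by positivity) hε0, log_rpow (by positivity), log_pow]
    have := (div_le_iff₀ (by positivity)).mp (Nat.le_ceil L)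
    nlinarith
  obtain ⟨t, htm, hFt⟩ := h m hk₀m
  have hN : coverNum F ε ≤ 2 ^ m := (coverNum_le_card (hFt.trans
    (Set.iUnion₂_mono fun x _ => closedBall_subset_closedBall hradius))).trans htm
  have hlogN : log (coverNum F ε) ≤ m * log 2 := by
    rcases (coverNum F ε).eq_zero_or_pos with h0 | hpos
    · rw [h0, Nat.cast_zero, log_zero]
      positivity
    · rw [← log_pow]
      exact log_le_log (by exact_mod_cast hpos) (by exact_mod_cast hN)
  have hmL : (m : ℝ) < L + 1 := Nat.ceil_lt_add_one (by positivity)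
  calc log (coverNum F ε) / -log ε ≤ m * log 2 / -log ε := by gcongr
    _ ≤ (L + 1) * log 2 / -log ε := by gcongr
    _ = β⁻¹ + log 2 / -log ε := by
        simp only [L]
        field_simp
        ring

lemma upperBoxDimE_le_of_covers {F : Set X} {β : ℝ} (hβ : 0 < β)
    (h : ∀ᶠ k : ℕ in atTop, ∃ t : Finset X, t.card ≤ 2 ^ k ∧
      F ⊆ ⋃ x ∈ t, closedBall x (((2 : ℝ) ^ k) ^ (-β))) :
    upperBoxDimE F ≤ ENNReal.ofReal β⁻¹ := by
  obtain ⟨k₀, hk₀⟩ := eventually_atTop.mp h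
  have hneglog : Tendsto (fun ε => -log ε) (𝓝[>] 0) atTop :=
    tendsto_neg_atBot_atTop.comp tendsto_log_nhdsGT_zero
  have hbound : ∀ᶠ ε in 𝓝[>] 0, log (coverNum F ε) / -log ε ≤ β⁻¹ + log 2 / -log ε := by
    filter_upwards [hneglog.eventually_ge_atTop (k₀ * (β * log 2)), Ioo_mem_nhdsGT one_pos]
      with ε hεk₀ ⟨hε0, hε1⟩
    exact log_coverNum_div_le_of_covers hβ hk₀ hε0 hε1 hεk₀
  have hlim : Tendsto (fun ε => β⁻¹ + log 2 / -log ε) (𝓝[>] 0) (𝓝 β⁻¹) := by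
    simpa using tendsto_const_nhds.add (hneglog.const_div_atTop (log 2))
  calc upperBoxDimE F ≤ limsup (fun ε => ENNReal.ofReal (β⁻¹ + log 2 / -log ε)) (𝓝[>] 0) :=
        limsup_le_limsup (hbound.mono fun _ h => ENNReal.ofReal_le_ofReal h)
    _ = ENNReal.ofReal β⁻¹ := ((ENNReal.continuous_ofReal.tendsto _).comp hlim).limsup_eq

lemma packingDim_le_iSup_upperBoxDimE {ι : Type*} [Countable ι] [Nonempty ι] {F : Set X}
    {B : ι → Set X} (hB : ∀ i, IsBounded (B i)) (hF : F ⊆ ⋃ i, B i) :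
    packingDim F ≤ ⨆ i, upperBoxDimE (B i) := by
  obtain ⟨f, hf⟩ := exists_surjective_nat ι
  rw [← hf.iSup_comp]
  exact sInf_le ⟨B ∘ f, fun n => hB _, hF.trans_eq (hf.iUnion_comp B).symm, rfl⟩

lemma exists_cover_of_packingDim_lt {F : Set X} {t : ℝ≥0∞} (h : packingDim F < t) :
    ∃ B : ℕ → Set X, (∀ i, IsBounded (B i)) ∧ F ⊆ ⋃ i, B i ∧ ⨆ i, upperBoxDimE (B i) < t := by
  obtain ⟨_, ⟨B, hB, hFB, rfl⟩, hBt⟩ := sInf_lt_iff.mp h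
  exact ⟨B, hB, hFB, hBt⟩

lemma packingDim_iUnion_le (S : ℕ → Set X) : packingDim (⋃ i, S i) ≤ ⨆ i, packingDim (S i) := by
  refine le_of_forall_gt_imp_ge_of_dense fun t ht => ?_
  choose B hB hSB hBt using fun i =>
    exists_cover_of_packingDim_lt ((le_iSup (fun i => packingDim (S i)) i).trans_lt ht)
  calc packingDim (⋃ i, S i) ≤ ⨆ p : ℕ × ℕ, upperBoxDimE (B p.1 p.2) :=
        packingDim_le_iSup_upperBoxDimE (fun p => hB p.1 p.2) fun x hx => by
          obtain ⟨i, hi⟩ := Set.mem_iUnion.mp hx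
          obtain ⟨j, hj⟩ := Set.mem_iUnion.mp (hSB i hi)
          exact Set.mem_iUnion.mpr ⟨(i, j), hj⟩
    _ ≤ t := iSup_le fun p => ((le_iSup _ p.2).trans_lt (hBt p.1)).le

end Covering

section PackingDimMeasure

variable {X : Type*} [MetricSpace X] [MeasurableSpace X]

lemma packingDimMeasure_le_packingDim {ν : Measure X} {A : Set X} (hA : MeasurableSet A)
    (hνA : ν A = 1) : packingDimMeasure ν ≤ packingDim A :=
  sInf_le ⟨A, hA, hνA, rfl⟩

lemma exists_measurableSet_of_packingDimMeasure_lt {ν : Measure X} {t : ℝ≥0∞}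
    (h : packingDimMeasure ν < t) : ∃ A, MeasurableSet A ∧ ν A = 1 ∧ packingDim A < t := by
  obtain ⟨_, ⟨A, hA, hνA, rfl⟩, hAt⟩ := sInf_lt_iff.mp h
  exact ⟨A, hA, hνA, hAt⟩

lemma packingDimMeasure_le_iSup_of_absolutelyContinuous (μ : Measure X) [IsProbabilityMeasure μ]
    (ν : ℕ → Measure X) [∀ i, IsProbabilityMeasure (ν i)] (h : μ ≪ Measure.sum ν) :
    packingDimMeasure μ ≤ ⨆ i, packingDimMeasure (ν i) := by
  refine le_of_forall_gt_imp_ge_of_dense fun t ht => ?_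
  choose A hA hνA hAt using fun i =>
    exists_measurableSet_of_packingDimMeasure_lt
      ((le_iSup (fun i => packingDimMeasure (ν i)) i).trans_lt ht)
  have hU : MeasurableSet (⋃ i, A i) := .iUnion hA
  have hμU : μ (⋃ i, A i) = 1 := by
    refine (prob_compl_eq_zero_iff hU).mp (h ?_)
    refine (Measure.sum_apply_eq_zero' hU.compl).mpr fun i => measure_mono_null ?_
      ((prob_compl_eq_zero_iff (hA i)).mpr (hνA i))
    exact Set.compl_subset_compl.mpr (Set.subset_iUnion A i)
  calc packingDimMeasure μ ≤ packingDim (⋃ i, A i) := packingDimMeasure_le_packingDim hU hμU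
    _ ≤ ⨆ i, packingDim (A i) := packingDim_iUnion_le A
    _ ≤ t := iSup_le fun i => (hAt i).le

end PackingDimMeasure

section Quantization

variable {X : Type*} [MetricSpace X] [MeasurableSpace X]

lemma quantError_nonneg (P : Measure X) (r : ℝ) (n : ℕ) : 0 ≤ quantError P r n :=
  Real.sInf_nonneg <| by
    rintro e ⟨α, -, -, rfl⟩
    exact rpow_nonneg (integral_nonneg fun x => rpow_nonneg infDist_nonneg _) _

lemma quantError_le {P : Measure X} {r : ℝ} {n : ℕ} {α : Finset X} (hα : α.Nonempty)
    (hn : α.card ≤ n) : quantError P r n ≤ (∫ x, infDist x (α : Set X) ^ r ∂P) ^ (1 / r) := by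
  refine csInf_le ⟨0, ?_⟩ ⟨α, hα.card_pos, hn, rfl⟩
  rintro e ⟨α, -, -, rfl⟩
  exact rpow_nonneg (integral_nonneg fun x => rpow_nonneg infDist_nonneg _) _

lemma exists_finset_lt_of_quantError_lt [Nonempty X] {P : Measure X} {r e : ℝ} {n : ℕ}
    (hn : n ≠ 0) (h : quantError P r n < e) :
    ∃ α : Finset X, α.Nonempty ∧ α.card ≤ n ∧
      (∫ x, infDist x (α : Set X) ^ r ∂P) ^ (1 / r) < e := by
  obtain ⟨x⟩ := ‹Nonempty X›
  have hne : {e : ℝ | ∃ α : Finset X, 1 ≤ α.card ∧ α.card ≤ n ∧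
      e = (∫ x, infDist x (↑α : Set X) ^ r ∂P) ^ (1 / r)}.Nonempty :=
    ⟨_, {x}, by simp, by simpa [Nat.one_le_iff_ne_zero], rfl⟩
  obtain ⟨_, ⟨α, hα, hαn, rfl⟩, hαe⟩ := exists_lt_of_csInf_lt hne h
  exact ⟨α, Finset.card_pos.mp hα, hαn, hαe⟩

lemma quantError_le_of_subset_iUnion_closedBall {ν : Measure X} [IsProbabilityMeasure ν]
    {K : Set X} (hνK : ν Kᶜ = 0) {r ε : ℝ} (hr : 0 < r) (hε : 0 ≤ ε) {n : ℕ} {t : Finset X}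
    (ht : t.card ≤ n) (hKt : K ⊆ ⋃ x ∈ t, closedBall x ε) : quantError ν r n ≤ ε := by
  have ht_ne : t.Nonempty := by
    rw [Finset.nonempty_iff_ne_empty]
    rintro rfl
    simp_all
  have hdist : ∀ᵐ x ∂ν, infDist x (t : Set X) ^ r ≤ ε ^ r := by
    filter_upwards [measure_eq_zero_iff_ae_notMem.mp hνK] with x hx
    obtain ⟨y, hy, hxy⟩ := Set.mem_iUnion₂.mp (hKt (not_not.mp hx))
    exact rpow_le_rpow infDist_nonneg ((infDist_le_dist_of_mem hy).trans hxy) hr.le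
  have hint : ∫ x, infDist x (t : Set X) ^ r ∂ν ≤ ε ^ r := by
    simpa using integral_mono_of_nonneg (.of_forall fun x => rpow_nonneg infDist_nonneg r)
      (integrable_const (ε ^ r)) hdist
  refine (quantError_le ht_ne ht).trans ?_
  rwa [one_div, rpow_inv_le_iff_of_pos (integral_nonneg fun x => rpow_nonneg infDist_nonneg _)
    hε hr]

lemma quantError_le_of_coverNum_le {ν : Measure X} [IsProbabilityMeasure ν] {K : Set X}
    (hK : TotallyBounded K) (hνK : ν Kᶜ = 0) {r ε : ℝ} (hr : 0 < r) (hε : 0 < ε) {n : ℕ}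
    (hn : coverNum K ε ≤ n) : quantError ν r n ≤ ε := by
  obtain ⟨t, ht, hKt⟩ := hK.exists_cover_card_le_coverNum hε
  exact quantError_le_of_subset_iUnion_closedBall hνK hr hε.le (ht.trans hn) hKt

lemma upperQuantDimE_le_of_eventually_quantError_le {P : Measure X} {r c : ℝ} (hc : 0 < c)
    (h : ∀ᶠ n : ℕ in atTop, quantError P r n ≤ (n : ℝ) ^ (-c⁻¹)) :
    upperQuantDimE P r ≤ ENNReal.ofReal c := by
  refine limsup_le_of_le (by isBoundedDefault) ?_
  filter_upwards [h, eventually_gt_atTop 1] with n hn hn1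
  refine ENNReal.ofReal_le_ofReal ?_
  have hlogn : 0 < log n := log_pos (by exact_mod_cast hn1)
  rcases (quantError_nonneg P r n).eq_or_lt with he | he
  · rw [← he, log_zero, neg_zero, div_zero]
    exact hc.le
  · have hloge : c⁻¹ * log n ≤ -log (quantError P r n) := by
      have := log_le_log he hn
      rw [log_rpow (by positivity)] at this
      linarith
    rw [div_le_iff₀ (hloge.trans_lt' (by positivity))]
    calc log n = c * (c⁻¹ * log n) := by field_simp
      _ ≤ c * -log (quantError P r n) := by gcongr

lemma eventually_quantError_lt_rpow_of_upperQuantDimE_lt {ν : Measure X} [IsProbabilityMeasure ν]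
    {K : Set X} (hK : TotallyBounded K) (hνK : ν Kᶜ = 0) {r c : ℝ} (hr : 0 < r) (hc : 0 < c)
    (h : upperQuantDimE ν r < ENNReal.ofReal c) :
    ∀ᶠ n : ℕ in atTop, quantError ν r n < (n : ℝ) ^ (-c⁻¹) := by
  have hsmall : ∀ᶠ n : ℕ in atTop, quantError ν r n ≤ 2⁻¹ := eventually_atTop.mpr
    ⟨coverNum K 2⁻¹, fun n hn => quantError_le_of_coverNum_le hK hνK hr (by norm_num) hn⟩
  filter_upwards [eventually_lt_of_limsup_lt h, hsmall, eventually_gt_atTop 0]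
    with n hn hn_small hn0
  have hnpos : (0 : ℝ) < n := by exact_mod_cast hn0
  rcases (quantError_nonneg ν r n).eq_or_lt with he | he
  · rw [← he]
    exact rpow_pos_of_pos hnpos _
  · have hloge : 0 < -log (quantError ν r n) :=
      neg_pos.mpr (log_neg he (hn_small.trans_lt (by norm_num)))
    rw [ENNReal.ofReal_lt_ofReal_iff hc, div_lt_iff₀ hloge] at hn
    rw [← log_lt_log_iff he (by positivity), log_rpow hnpos]
    have : c⁻¹ * log n < -log (quantError ν r n) := by
      rw [inv_mul_lt_iff₀ hc]
      linarith
    linarith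

theorem upperQuantDimE_le_upperBoxDimE (ν : Measure X) [IsProbabilityMeasure ν] {K : Set X}
    (hK : TotallyBounded K) (hνK : ν Kᶜ = 0) {r : ℝ} (hr : 0 < r) :
    upperQuantDimE ν r ≤ upperBoxDimE K := by
  refine le_of_forall_gt_imp_ge_of_dense fun b hb => ?_
  rcases eq_or_ne b ⊤ with rfl | hb_top
  · exact le_top
  set c := b.toReal
  have hc : 0 < c := ENNReal.toReal_pos (pos_of_gt hb).ne' hb_top
  rw [← ENNReal.ofReal_toReal hb_top] at hb ⊢
  refine upperQuantDimE_le_of_eventually_quantError_le hc ?_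
  have hscale : Tendsto (fun n : ℕ => (n : ℝ) ^ (-c⁻¹)) atTop (𝓝[>] 0) :=
    tendsto_nhdsWithin_iff.mpr ⟨(tendsto_rpow_neg_atTop (inv_pos.mpr hc)).comp
      tendsto_natCast_atTop_atTop, (eventually_gt_atTop 0).mono fun n hn =>
        rpow_pos_of_pos (Nat.cast_pos.mpr hn) _⟩
  filter_upwards [hscale.eventually (eventually_coverNum_le_rpow_of_upperBoxDimE_lt hc hb),
    eventually_gt_atTop 0] with n hn hn0
  refine quantError_le_of_coverNum_le hK hνK hr (rpow_pos_of_pos (Nat.cast_pos.mpr hn0) _) ?_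
  rwa [← rpow_mul (Nat.cast_nonneg n), neg_mul_neg, inv_mul_cancel₀ hc.ne', rpow_one,
    Nat.cast_le] at hn

lemma measure_lt_infDist_le_integral_rpow_div {ν : Measure X} [IsFiniteMeasure ν] {s : Set X}
    {r R : ℝ} (hr : 0 < r) (hR : 0 < R) (hint : Integrable (fun x => infDist x s ^ r) ν) :
    ν {x | R < infDist x s} ≤ ENNReal.ofReal ((∫ x, infDist x s ^ r ∂ν) / R ^ r) := by
  have hmarkov := mul_meas_ge_le_integral_of_nonneg
    (.of_forall fun x => rpow_nonneg infDist_nonneg r) hint (R ^ r)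
  calc ν {x | R < infDist x s} ≤ ν {x | R ^ r ≤ infDist x s ^ r} :=
        measure_mono fun x hx => rpow_le_rpow hR.le (le_of_lt hx) hr.le
    _ = ENNReal.ofReal (ν.real {x | R ^ r ≤ infDist x s ^ r}) := (ofReal_measureReal).symm
    _ ≤ _ := ENNReal.ofReal_le_ofReal ((le_div_iff₀' (rpow_pos_of_pos hR r)).mpr hmarkov)

end Quantization

lemma ENNReal.tsum_ne_top_of_eventually_le_pow {f : ℕ → ℝ≥0∞} (hf : ∀ n, f n ≠ ⊤) {ρ : ℝ≥0∞}
    (hρ : ρ < 1) (h : ∀ᶠ n in atTop, f n ≤ ρ ^ n) : ∑' n, f n ≠ ⊤ := by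
  obtain ⟨N, hN⟩ := eventually_atTop.mp h
  rw [← Summable.sum_add_tsum_nat_add' (k := N) ENNReal.summable]
  refine ENNReal.add_ne_top.mpr ⟨ENNReal.sum_ne_top.mpr fun n _ => hf n, ?_⟩
  have hle : ∀ n, f (n + N) ≤ ρ ^ n := fun n => (hN (n + N) (Nat.le_add_left N n)).trans
    (pow_le_pow_of_le_one zero_le hρ.le (Nat.le_add_right n N))
  refine ne_top_of_le_ne_top ?_ (ENNReal.tsum_le_tsum hle)
  rw [ENNReal.tsum_geometric]
  exact ENNReal.inv_ne_top.mpr (tsub_pos_of_lt hρ).ne'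

section PackingBound

variable {X : Type*} [MetricSpace X] [MeasurableSpace X] [OpensMeasurableSpace X]

lemma integrable_infDist_rpow {ν : Measure X} [IsFiniteMeasure ν] {K : Set X} (hK : IsBounded K)
    (hνK : ν Kᶜ = 0) {α : Finset X} (hα : α.Nonempty) {r : ℝ} (hr : 0 ≤ r) :
    Integrable (fun x => infDist x (α : Set X) ^ r) ν := by
  obtain ⟨a, ha⟩ := hα
  obtain ⟨C, hC⟩ := hK.subset_closedBall a
  refine .of_bound ((continuous_infDist_pt _).rpow_const fun _ => Or.inr hr).aestronglyMeasurable
    (C ^ r) ?_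
  filter_upwards [measure_eq_zero_iff_ae_notMem.mp hνK] with x hx
  rw [Real.norm_of_nonneg (rpow_nonneg infDist_nonneg _)]
  exact rpow_le_rpow infDist_nonneg
    ((infDist_le_dist_of_mem (by simpa)).trans (hC (not_not.mp hx))) hr

lemma ae_eventually_infDist_le_rpow {ν : Measure X} [IsFiniteMeasure ν] {K : Set X}
    (hK : IsBounded K) (hνK : ν Kᶜ = 0) {α : ℕ → Finset X} (hα : ∀ k, (α k).Nonempty)
    {r β γ : ℝ} (hr : 0 < r) (hβγ : β < γ)
    (h : ∀ᶠ k : ℕ in atTop,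
      (∫ x, infDist x (α k : Set X) ^ r ∂ν) ^ (1 / r) < ((2 : ℝ) ^ k) ^ (-γ)) :
    ∀ᵐ x ∂ν, ∀ᶠ k : ℕ in atTop, infDist x (α k : Set X) ≤ ((2 : ℝ) ^ k) ^ (-β) := by
  set ρ : ℝ := (2 : ℝ) ^ ((β - γ) * r)
  have hρ : ENNReal.ofReal ρ < 1 := ENNReal.ofReal_lt_one.mpr
    (rpow_lt_one_of_one_lt_of_neg one_lt_two (mul_neg_of_neg_of_pos (sub_neg.mpr hβγ) hr))
  have hmarkov : ∀ᶠ k : ℕ in atTop,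
      ν {x | ((2 : ℝ) ^ k) ^ (-β) < infDist x (α k : Set X)} ≤ ENNReal.ofReal ρ ^ k := by
    filter_upwards [h] with k hk
    rw [one_div] at hk
    replace hk := (rpow_inv_le_iff_of_pos (integral_nonneg fun x => rpow_nonneg infDist_nonneg _)
      (by positivity) hr).mp hk.le
    refine (measure_lt_infDist_le_integral_rpow_div hr (by positivity)
      (integrable_infDist_rpow hK hνK (hα k) hr.le)).trans ?_
    rw [← ENNReal.ofReal_pow (by positivity)]
    refine ENNReal.ofReal_le_ofReal ?_
    calc _ ≤ (((2 : ℝ) ^ k) ^ (-γ)) ^ r / (((2 : ℝ) ^ k) ^ (-β)) ^ r := by gcongr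
      _ = ρ ^ k := by
        simp only [ρ, ← rpow_natCast, ← rpow_mul zero_le_two, ← rpow_sub two_pos]
        ring_nf
  filter_upwards [ae_eventually_notMem (ENNReal.tsum_ne_top_of_eventually_le_pow
    (fun _ => measure_ne_top _ _) hρ hmarkov)] with x hx
  exact hx.mono fun k hk => not_lt.mp hk

lemma packingDimMeasure_le_of_ae_eventually_infDist_le {ν : Measure X} [IsProbabilityMeasure ν]
    {α : ℕ → Finset X} (hα : ∀ k, (α k).Nonempty) (hα_card : ∀ k, (α k).card ≤ 2 ^ k) {β : ℝ}
    (hβ : 0 < β) (h : ∀ᵐ x ∂ν, ∀ᶠ k : ℕ in atTop, infDist x (α k : Set X) ≤ ((2 : ℝ) ^ k) ^ (-β)) :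
    packingDimMeasure ν ≤ ENNReal.ofReal β⁻¹ := by
  set F : ℕ → Set X := fun j => ⋂ k ≥ j, {x | infDist x (α k : Set X) ≤ ((2 : ℝ) ^ k) ^ (-β)}
  have hF_closed : ∀ j, IsClosed (F j) := fun j =>
    isClosed_biInter fun k _ => isClosed_le (continuous_infDist_pt _) continuous_const
  have hF_cover : ∀ j k, j ≤ k → F j ⊆ ⋃ y ∈ α k, closedBall y (((2 : ℝ) ^ k) ^ (-β)) :=
    fun j k hjk x hx => mem_iUnion_closedBall_of_infDist_le (hα k) (Set.mem_iInter₂.mp hx k hjk)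
  have hF_bdd : ∀ j, IsBounded (F j) := fun j =>
    ((isBounded_biUnion_finset _).mpr fun _ _ => isBounded_closedBall).subset (hF_cover j j le_rfl)
  have hU : MeasurableSet (⋃ j, F j) := .iUnion fun j => (hF_closed j).measurableSet
  have hνU : ν (⋃ j, F j) = 1 := by
    refine (prob_compl_eq_zero_iff hU).mp (mem_ae_iff.mp ?_)
    filter_upwards [h] with x hx
    obtain ⟨j, hj⟩ := eventually_atTop.mp hx
    exact Set.mem_iUnion.mpr ⟨j, Set.mem_iInter₂.mpr hj⟩
  calc packingDimMeasure ν ≤ packingDim (⋃ j, F j) := packingDimMeasure_le_packingDim hU hνU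
    _ ≤ ⨆ j, upperBoxDimE (F j) := packingDim_le_iSup_upperBoxDimE hF_bdd subset_rfl
    _ ≤ ENNReal.ofReal β⁻¹ := iSup_le fun j => upperBoxDimE_le_of_covers hβ
        (eventually_atTop.mpr ⟨j, fun k hk => ⟨α k, hα_card k, hF_cover j k hk⟩⟩)

theorem packingDimMeasure_le_upperQuantDimE (ν : Measure X) [IsProbabilityMeasure ν] {K : Set X}
    (hK : TotallyBounded K) (hνK : ν Kᶜ = 0) {r : ℝ} (hr : 0 < r) :
    packingDimMeasure ν ≤ upperQuantDimE ν r := by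
  have : Nonempty X := nonempty_of_isProbabilityMeasure ν
  refine le_of_forall_gt_imp_ge_of_dense fun d hd => ?_
  rcases eq_or_ne d ⊤ with rfl | hd_top
  · exact le_top
  obtain ⟨c, -, hc, hcd⟩ := ENNReal.lt_iff_exists_real_btwn.mp hd
  have hc0 : 0 < c := ENNReal.ofReal_pos.mp (pos_of_gt hc)
  rw [← ENNReal.ofReal_toReal hd_top] at hcd ⊢
  have hcd' : c < d.toReal := (ENNReal.ofReal_lt_ofReal_iff'.mp hcd).1
  have hquant : ∀ᶠ k : ℕ in atTop, quantError ν r (2 ^ k) < ((2 : ℝ) ^ k) ^ (-c⁻¹) := by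
    simpa using (tendsto_pow_atTop_atTop_of_one_lt one_lt_two).eventually
      (eventually_quantError_lt_rpow_of_upperQuantDimE_lt hK hνK hr hc0 hc)
  have hcode : ∀ k : ℕ, ∃ α : Finset X, α.Nonempty ∧ α.card ≤ 2 ^ k ∧
      (quantError ν r (2 ^ k) < ((2 : ℝ) ^ k) ^ (-c⁻¹) →
        (∫ x, infDist x (α : Set X) ^ r ∂ν) ^ (1 / r) < ((2 : ℝ) ^ k) ^ (-c⁻¹)) := by
    intro k
    by_cases hk : quantError ν r (2 ^ k) < ((2 : ℝ) ^ k) ^ (-c⁻¹)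
    · obtain ⟨α, hα, hαk, hlt⟩ := exists_finset_lt_of_quantError_lt (pow_ne_zero k two_ne_zero) hk
      exact ⟨α, hα, hαk, fun _ => hlt⟩
    · obtain ⟨x⟩ := ‹Nonempty X›
      exact ⟨{x}, Finset.singleton_nonempty x, by simp [Nat.one_le_two_pow], fun h => absurd h hk⟩
  choose α hα hα_card hα_lt using hcode
  have hae := ae_eventually_infDist_le_rpow hK.isBounded hνK hα hr
    (inv_strictAnti₀ hc0 hcd') (hquant.mono hα_lt)
  simpa using packingDimMeasure_le_of_ae_eventually_infDist_le hα hα_card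
    (inv_pos.mpr (hc0.trans hcd')) hae

end PackingBound

section Decomposition

variable {X : Type*} [MeasurableSpace X]

lemma MeasureTheory.Measure.sum_two_inv_pow_succ_smul (μ : Measure X) :
    Measure.sum (fun j : ℕ => (2⁻¹ : ℝ≥0∞) ^ (j + 1) • μ) = μ := by
  ext s hs
  rw [Measure.sum_apply _ hs]
  simp only [Measure.smul_apply, smul_eq_mul]
  rw [ENNReal.tsum_mul_right, ENNReal.tsum_geometric_add_one, ENNReal.one_sub_inv_two, inv_inv,
    ENNReal.inv_mul_cancel two_ne_zero ENNReal.ofNat_ne_top, one_mul]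

lemma MeasureTheory.Measure.exists_sum_eq_sum_smul_ne_zero (ρ : ℕ → Measure X)
    (h : Measure.sum ρ ≠ 0) : ∃ (σ : ℕ → ℕ) (w : ℕ → ℝ≥0∞), (∀ n, ρ (σ n) ≠ 0) ∧
      (∀ n, w n ≠ 0 ∧ w n ≠ ⊤) ∧ Measure.sum ρ = Measure.sum fun n => w n • ρ (σ n) := by
  obtain ⟨i₀, hi₀⟩ : ∃ i, ρ i ≠ 0 := by
    by_contra! h'
    exact h (by simp [h'])
  set S : Set (ℕ × ℕ) := {p | ρ p.1 ≠ 0}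
  have : Infinite S := Set.infinite_coe_iff.mpr <| Set.infinite_of_injective_forall_mem
    (f := fun j => (i₀, j)) (fun _ _ h => (Prod.ext_iff.mp h).2) fun _ => hi₀
  obtain ⟨_⟩ := nonempty_denumerable_iff.mpr ⟨inferInstanceAs (Countable S), this⟩
  set e := Denumerable.eqv S
  set g : ℕ × ℕ → Measure X := fun p => (2⁻¹ : ℝ≥0∞) ^ (p.2 + 1) • ρ p.1
  have hg : Function.extend ((↑) : S → ℕ × ℕ) (g ∘ (↑)) 0 = g := by
    funext p
    by_cases hp : p ∈ S
    · exact Subtype.val_injective.extend_apply _ _ ⟨p, hp⟩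
    · rw [Function.extend_apply' _ _ _ fun ⟨q, hq⟩ => hp (hq ▸ q.2)]
      simp [g, show ρ p.1 = 0 from not_not.mp hp]
  refine ⟨fun n => (e.symm n).1.1, fun n => 2⁻¹ ^ ((e.symm n).1.2 + 1), fun n => (e.symm n).2,
    fun n => ⟨by simp, by simp⟩, ?_⟩
  calc Measure.sum ρ = Measure.sum fun i => Measure.sum fun j => g (i, j) :=
        by simp only [g, Measure.sum_two_inv_pow_succ_smul]
    _ = Measure.sum g := Measure.sum_sum _
    _ = Measure.sum (g ∘ ((↑) : S → ℕ × ℕ)) := by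
        rw [← Measure.sum_extend_zero Subtype.val_injective, hg]
    _ = _ := (Measure.sum_comp_equiv e.symm _).symm

end Decomposition

section CountableStability

variable {X : Type*} [MetricSpace X] [MeasurableSpace X] [OpensMeasurableSpace X]

theorem packingDimMeasure_le_iSup_upperQuantDimE (μ : Measure X) [IsProbabilityMeasure μ]
    {r : ℝ} (hr : 0 < r) {s : ℕ → ℝ≥0∞} {ν : ℕ → Measure X} [∀ i, IsProbabilityMeasure (ν i)]
    (hν : ∀ i, ∃ K : Set X, TotallyBounded K ∧ ν i Kᶜ = 0)
    (hμ : μ = Measure.sum fun i => s i • ν i) :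
    packingDimMeasure μ ≤ ⨆ i, upperQuantDimE (ν i) r := by
  have hac : μ ≪ Measure.sum ν := hμ ▸ Measure.absolutelyContinuous_sum_left fun i =>
    Measure.smul_absolutelyContinuous.trans (Measure.absolutelyContinuous_sum_right i .rfl)
  refine (packingDimMeasure_le_iSup_of_absolutelyContinuous μ ν hac).trans (iSup_mono fun i => ?_)
  obtain ⟨K, hK, hνK⟩ := hν i
  exact packingDimMeasure_le_upperQuantDimE (ν i) hK hνK hr

theorem exists_eq_sum_smul_iSup_upperQuantDimE_le [ProperSpace X] (μ : Measure X)
    [IsProbabilityMeasure μ] {r : ℝ} (hr : 0 < r) {A : Set X} (hA : MeasurableSet A)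
    (hμA : μ A = 1) {B : ℕ → Set X} (hB : ∀ i, IsBounded (B i)) (hAB : A ⊆ ⋃ i, B i) :
    ∃ (s : ℕ → ℝ) (ν : ℕ → Measure X), (∀ i, 0 < s i) ∧ (∀ i, IsProbabilityMeasure (ν i)) ∧
      (∀ i, ∃ Ki : Set X, IsCompact Ki ∧ ν i Kiᶜ = 0) ∧
      μ = Measure.sum (fun i => ENNReal.ofReal (s i) • ν i) ∧
      ⨆ i, upperQuantDimE (ν i) r ≤ ⨆ i, upperBoxDimE (B i) := by
  set E := disjointed fun i : ℕ => A ∩ closure (B i)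
  have hE : ∀ i, MeasurableSet (E i) :=
    .disjointed fun i => hA.inter isClosed_closure.measurableSet
  have hEB : ∀ i, E i ⊆ closure (B i) := fun i =>
    (disjointed_subset _ i).trans Set.inter_subset_right
  have hμE : μ = Measure.sum fun i => μ.restrict (E i) := by
    rw [← Measure.restrict_iUnion (disjoint_disjointed _) hE, Measure.restrict_eq_self_of_ae_mem]
    filter_upwards [mem_ae_iff.mpr ((prob_compl_eq_zero_iff hA).mpr hμA)] with x hx
    obtain ⟨i, hi⟩ := Set.mem_iUnion.mp (hAB hx)
    rw [iUnion_disjointed]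
    exact Set.mem_iUnion.mpr ⟨i, hx, subset_closure hi⟩
  obtain ⟨σ, w, hσ, hw, hsum⟩ :=
    Measure.exists_sum_eq_sum_smul_ne_zero _ (hμE ▸ IsProbabilityMeasure.ne_zero μ)
  simp only [Ne, Measure.restrict_eq_zero] at hσ
  have hν : ∀ n, IsProbabilityMeasure μ[|E (σ n)] := fun n => cond_isProbabilityMeasure (hσ n)
  have hνB : ∀ n, μ[|E (σ n)] (closure (B (σ n)))ᶜ = 0 := fun n =>
    mem_ae_iff.mp ((ae_cond_mem (hE _)).mono fun x hx => hEB _ hx)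
  refine ⟨fun n => (w n * μ (E (σ n))).toReal, fun n => μ[|E (σ n)],
    fun n => ENNReal.toReal_pos (mul_ne_zero (hw n).1 (hσ n)) (ENNReal.mul_ne_top (hw n).2
      (measure_ne_top _ _)), hν, fun n => ⟨_, (hB _).isCompact_closure, hνB n⟩, ?_,
    iSup_le fun n => ?_⟩
  · refine hμE.trans (hsum.trans (Measure.sum_congr fun n => ?_))
    dsimp only
    rw [ENNReal.ofReal_toReal (ENNReal.mul_ne_top (hw n).2 (measure_ne_top _ _)),
      ProbabilityTheory.cond, smul_smul, mul_assoc,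
      ENNReal.mul_inv_cancel (hσ n) (measure_ne_top _ _), mul_one]
  · calc upperQuantDimE μ[|E (σ n)] r ≤ upperBoxDimE (closure (B (σ n))) :=
          upperQuantDimE_le_upperBoxDimE _ (hB _).isCompact_closure.totallyBounded (hνB n) hr
      _ = upperBoxDimE (B (σ n)) := upperBoxDimE_closure _
      _ ≤ ⨆ i, upperBoxDimE (B i) := le_iSup (fun i => upperBoxDimE (B i)) _

end CountableStability

theorem packingDimMeasure_eq_countably_stabilized_upperQuantDim_general (q : ℕ) (r : ℝ) (hr : 1 ≤ r)
    (μ : Measure (EuclideanSpace ℝ (Fin q))) [IsProbabilityMeasure μ] :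
    packingDimMeasure μ = sInf {d : ℝ≥0∞ |
      ∃ (s : ℕ → ℝ) (ν : ℕ → Measure (EuclideanSpace ℝ (Fin q))),
        (∀ i, 0 < s i) ∧ (∀ i, IsProbabilityMeasure (ν i)) ∧
        (∀ i, ∃ Ki : Set (EuclideanSpace ℝ (Fin q)), IsCompact Ki ∧ ν i Kiᶜ = 0) ∧
        μ = Measure.sum (fun i => ENNReal.ofReal (s i) • ν i) ∧
        d = ⨆ i, upperQuantDimE (ν i) r} := by
  have hr₀ : 0 < r := one_pos.trans_le hr
  refine le_antisymm (le_sInf ?_) (le_of_forall_gt_imp_ge_of_dense fun t ht => ?_)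
  · rintro _ ⟨s, ν, -, hν, hνK, hμ, rfl⟩
    exact packingDimMeasure_le_iSup_upperQuantDimE μ hr₀
      (fun i => (hνK i).imp fun _ hK => ⟨hK.1.totallyBounded, hK.2⟩) hμ
  · obtain ⟨A, hA, hμA, hAt⟩ := exists_measurableSet_of_packingDimMeasure_lt ht
    obtain ⟨B, hB, hAB, hBt⟩ := exists_cover_of_packingDim_lt hAt
    obtain ⟨s, ν, hs, hν, hνK, hμ, hνB⟩ :=
      exists_eq_sum_smul_iSup_upperQuantDimE_le μ hr₀ hA hμA hB hAB
    refine (sInf_le ?_).trans (hνB.trans hBt.le)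
    exact ⟨s, ν, hs, hν, hνK, hμ, rfl⟩

/-- for `r ∈ [1,∞)` and a compactly supported Borel probability measure `μ` on
`ℝ^q`, the packing dimension of `μ` equals the infimum of `sup_{i∈ℕ} D̄_r(μ_i)` over all
countable decompositions `μ = Σ_{i∈ℕ} s_i μ_i` into compactly supported Borel probability
measures with positive weights. -/
theorem packingDimMeasure_eq_countably_stabilized_upperQuantDim (q : ℕ) (r : ℝ) (hr : 1 ≤ r)
    (μ : Measure (EuclideanSpace ℝ (Fin q))) [IsProbabilityMeasure μ]
    (K : Set (EuclideanSpace ℝ (Fin q))) (hK : IsCompact K) (hμK : μ Kᶜ = 0) :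
    packingDimMeasure μ = sInf {d : ℝ≥0∞ |
      ∃ (s : ℕ → ℝ) (ν : ℕ → Measure (EuclideanSpace ℝ (Fin q))),
        (∀ i, 0 < s i) ∧ (∀ i, IsProbabilityMeasure (ν i)) ∧
        (∀ i, ∃ Ki : Set (EuclideanSpace ℝ (Fin q)), IsCompact Ki ∧ ν i Kiᶜ = 0) ∧
        μ = Measure.sum (fun i => ENNReal.ofReal (s i) • ν i) ∧
        d = ⨆ i, upperQuantDimE (ν i) r} :=
  packingDimMeasure_eq_countably_stabilized_upperQuantDim_general q r hr μ
end

section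
/- For every r ∈ [1,∞) there exists a compactly supported Borel probability measure μ on ℝ^q such that D̄_r(μ) ≠ dim_P^*(μ), i.e. the upper quantization dimension of order r does not coincide with the packing dimension of the measure. -/
open MeasureTheory Filter Metric
open scoped ENNReal NNReal

/-!
Take the atomic probability measure with mass `1/((k+1)(k+2))` at `v/(2(k+1))`, `‖v‖ = 1`.
Being carried by a countable set, it has packing dimension `0`. But any `n` points leave at
least `n` of the first `2n` atoms, which have mass at least `1/(8n²)` and are `1/(8n²)`-separated,
at distance at least `1/(16n²)` from all of them; hence `e_{n,r} ≥ 1/(128 n³) ≥ n⁻⁴` for large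
`n`, and the upper quantization dimension is at least `1/4`.
-/

open scoped Finset

lemma sum_measureReal_singleton_mul_le_integral {E : Type*} [MeasurableSpace E]
    [MeasurableSingletonClass E] {P : Measure E}
    {f : E → ℝ} (hf : Integrable f P) (hf0 : 0 ≤ f) (T : Finset E) :
    ∑ y ∈ T, P.real {y} * f y ≤ ∫ x, f x ∂P :=
  calc ∑ y ∈ T, P.real {y} * f y = ∑ y ∈ T, ∫ x in {y}, f x ∂P := by
        simp only [integral_singleton, smul_eq_mul]
    _ = ∫ x in ⋃ y ∈ T, {y}, f x ∂P :=
        (integral_biUnion_finset T (fun y _ => measurableSet_singleton y)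
          (fun y _ z _ hyz => Set.disjoint_singleton.2 hyz) fun y _ => hf.integrableOn).symm
    _ ≤ ∫ x, f x ∂P := setIntegral_le_integral hf (Eventually.of_forall hf0)

section MetricSpace

variable {E : Type*} [MetricSpace E]

lemma card_filter_infDist_lt_le {S α : Finset E} (hα : α.Nonempty) {δ : ℝ}
    (hS : (S : Set E).Pairwise fun x y => 2 * δ ≤ dist x y) :
    #{y ∈ S | infDist y α < δ} ≤ #α := by
  refine Finset.card_le_card_of_forall_subsingleton (fun y a => dist y a < δ) ?_ ?_
  · intro y hy
    exact (infDist_lt_iff (by exact_mod_cast hα)).1 (Finset.mem_filter.1 hy).2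
  · intro a _ y hy y' hy'
    by_contra hne
    have := hS (Finset.mem_filter.1 hy.1).1 (Finset.mem_filter.1 hy'.1).1 hne
    linarith [dist_triangle_right y y' a, hy.2, hy'.2]

lemma Set.Subsingleton.coverNum_le_one {A : Set E} (hA : A.Subsingleton) {ε : ℝ} (hε : 0 ≤ ε) :
    coverNum A ε ≤ 1 := by
  refine Nat.sInf_le ?_
  rcases hA.eq_empty_or_singleton with rfl | ⟨a, rfl⟩
  · exact ⟨∅, by simp, Set.empty_subset _⟩
  · exact ⟨{a}, by simp, by simpa using hε⟩

lemma Set.Subsingleton.upperBoxDimE_eq_zero {A : Set E} (hA : A.Subsingleton) :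
    upperBoxDimE A = 0 := by
  have hzero : ∀ᶠ ε : ℝ in nhdsWithin 0 (Set.Ioi 0),
      ENNReal.ofReal (Real.log (coverNum A ε) / (-Real.log ε)) = 0 := by
    filter_upwards [self_mem_nhdsWithin] with ε hε
    rcases Nat.le_one_iff_eq_zero_or_eq_one.1 (hA.coverNum_le_one hε.le) with hN | hN <;>
      simp [hN]
  exact (limsup_congr hzero).trans (limsup_const 0)

lemma Set.Countable.packingDim_eq_zero {F : Set E} (hF : F.Countable) : packingDim F = 0 := by
  let := hF.toEncodable
  have hA (i : ℕ) : (Subtype.val '' {x : F | Encodable.encode x = i}).Subsingleton :=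
    Set.Subsingleton.image (fun x hx y hy => Encodable.encode_injective (hx.trans hy.symm)) _
  refine le_zero_iff.1 (sInf_le ⟨_, fun i => (hA i).finite.isBounded, fun x hx => ?_,
    by simp [(hA _).upperBoxDimE_eq_zero]⟩)
  exact Set.mem_iUnion.2 ⟨_, ⟨x, hx⟩, rfl, rfl⟩

variable [MeasurableSpace E]

lemma integrable_infDist_rpow_of_ae_mem_closedBall [OpensMeasurableSpace E] {P : Measure E}
    [IsFiniteMeasure P] {a : E} {ρ : ℝ} (ha : ∀ᵐ x ∂P, x ∈ closedBall a ρ) {r : ℝ} (hr : 0 ≤ r)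
    (α : Set E) : Integrable (fun x => infDist x α ^ r) P := by
  refine .of_bound ((continuous_infDist_pt α).rpow_const fun _ => Or.inr hr).aestronglyMeasurable
    ((infDist a α + ρ) ^ r) ?_
  filter_upwards [ha] with x hx
  rw [Real.norm_of_nonneg (Real.rpow_nonneg infDist_nonneg r)]
  exact Real.rpow_le_rpow infDist_nonneg
    ((infDist_le_infDist_add_dist).trans (by linarith [mem_closedBall.1 hx])) hr

lemma le_integral_infDist_rpow [MeasurableSingletonClass E] {P : Measure E} {r : ℝ} (hr : 0 ≤ r)
    {S α : Finset E} (hα : α.Nonempty) {δ m : ℝ} (hδ : 0 ≤ δ) (hm : 0 ≤ m)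
    (hS : (S : Set E).Pairwise fun x y => 2 * δ ≤ dist x y) (hmass : ∀ y ∈ S, m ≤ P.real {y})
    (hint : Integrable (fun x => infDist x α ^ r) P) :
    ((#S - #α : ℕ) : ℝ) * m * δ ^ r ≤ ∫ x, infDist x α ^ r ∂P := by
  set T := {y ∈ S | ¬ infDist y α < δ} with hT_def
  have hT : #S - #α ≤ #T := by
    have := Finset.card_filter_add_card_filter_not (s := S) (fun y => infDist y α < δ)
    have := card_filter_infDist_lt_le hα hS
    rw [hT_def]
    omega
  calc ((#S - #α : ℕ) : ℝ) * m * δ ^ r ≤ #T * (m * δ ^ r) := by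
        rw [mul_assoc]; gcongr
    _ = ∑ _ ∈ T, m * δ ^ r := by rw [Finset.sum_const, nsmul_eq_mul]
    _ ≤ ∑ y ∈ T, P.real {y} * infDist y α ^ r := by
        refine Finset.sum_le_sum fun y hy => ?_
        obtain ⟨hyS, hyδ⟩ := Finset.mem_filter.1 hy
        exact mul_le_mul (hmass y hyS) (Real.rpow_le_rpow hδ (not_lt.1 hyδ) hr)
          (Real.rpow_nonneg hδ r) measureReal_nonneg
    _ ≤ ∫ x, infDist x α ^ r ∂P :=
        sum_measureReal_singleton_mul_le_integral hint
          (fun x => Real.rpow_nonneg infDist_nonneg r) T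

lemma le_quantError_of_separated [MeasurableSingletonClass E] {P : Measure E} {r : ℝ} (hr : 0 < r)
    (hint : ∀ α : Finset E, Integrable (fun x => infDist x α ^ r) P) {n : ℕ} (hn : 1 ≤ n)
    {S : Finset E} (hS : 2 * n ≤ #S) {δ m : ℝ} (hδ : 0 ≤ δ) (hm : 0 ≤ m)
    (hsep : (S : Set E).Pairwise fun x y => 2 * δ ≤ dist x y) (hmass : ∀ y ∈ S, m ≤ P.real {y}) :
    (n * m * δ ^ r) ^ (1 / r) ≤ quantError P r n := by
  obtain ⟨y, -⟩ : S.Nonempty := Finset.card_pos.1 (by omega)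
  refine le_csInf ⟨_, {y}, by simp, by simpa using hn, rfl⟩ ?_
  rintro _ ⟨α, hα, hαn, rfl⟩
  refine Real.rpow_le_rpow (by positivity) (le_trans ?_
    (le_integral_infDist_rpow hr.le (Finset.card_pos.1 hα) hδ hm hsep hmass (hint α)))
    (by positivity)
  gcongr
  exact_mod_cast (by omega : n ≤ #S - #α)

lemma quantError_le_of_ae_mem_closedBall {P : Measure E} [IsProbabilityMeasure P] {r ρ : ℝ}
    (hr : 0 < r) (hρ : 0 ≤ ρ) {a : E} (ha : ∀ᵐ x ∂P, x ∈ closedBall a ρ) {n : ℕ} (hn : 1 ≤ n) :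
    quantError P r n ≤ ρ := by
  have hnonneg : 0 ≤ fun x => infDist x (({a} : Finset E) : Set E) ^ r :=
    fun x => Real.rpow_nonneg infDist_nonneg r
  have hint : ∫ x, infDist x ({a} : Finset E) ^ r ∂P ≤ ρ ^ r := by
    refine (integral_mono_of_nonneg (Eventually.of_forall hnonneg)
      (integrable_const (ρ ^ r)) ?_).trans_eq (by simp)
    filter_upwards [ha] with x hx
    simpa [infDist_singleton] using Real.rpow_le_rpow dist_nonneg (mem_closedBall.1 hx) hr.le
  calc quantError P r n ≤ (∫ x, infDist x ({a} : Finset E) ^ r ∂P) ^ (1 / r) := by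
        refine csInf_le ⟨0, ?_⟩ ⟨{a}, by simp, by simpa using hn, rfl⟩
        rintro _ ⟨α, -, -, rfl⟩
        exact Real.rpow_nonneg (integral_nonneg fun x => Real.rpow_nonneg infDist_nonneg r) _
    _ ≤ (ρ ^ r) ^ (1 / r) := Real.rpow_le_rpow (integral_nonneg hnonneg) hint (by positivity)
    _ = ρ := by rw [← Real.rpow_mul hρ, mul_one_div_cancel hr.ne', Real.rpow_one]

lemma inv_le_upperQuantDimE {P : Measure E} {r s : ℝ} (hs : 0 < s)
    (h : ∀ᶠ n : ℕ in atTop, (n : ℝ) ^ (-s) ≤ quantError P r n ∧ quantError P r n < 1) :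
    ENNReal.ofReal s⁻¹ ≤ upperQuantDimE P r := by
  refine le_limsup_of_frequently_le (Eventually.frequently ?_)
  filter_upwards [h, eventually_ge_atTop 1] with n ⟨hlow, hlt⟩ hn
  have hn0 : (0 : ℝ) < n := by exact_mod_cast hn
  have he0 : 0 < quantError P r n := (Real.rpow_pos_of_pos hn0 _).trans_le hlow
  have hlog : 0 < -Real.log (quantError P r n) := neg_pos.2 (Real.log_neg he0 hlt)
  have hlog_le : -Real.log (quantError P r n) ≤ s * Real.log n := by
    have := Real.log_le_log (Real.rpow_pos_of_pos hn0 _) hlow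
    rw [Real.log_rpow hn0] at this
    linarith
  refine ENNReal.ofReal_le_ofReal ((le_div_iff₀ hlog).2 ?_)
  calc s⁻¹ * -Real.log (quantError P r n) ≤ s⁻¹ * (s * Real.log n) := by gcongr
    _ = Real.log n := by field_simp

end MetricSpace

section HarmonicAtoms

variable {E : Type*} [NormedAddCommGroup E] [NormedSpace ℝ E]

noncomputable def harmonicWeight (k : ℕ) : ℝ := (((k : ℝ) + 1) * ((k : ℝ) + 2))⁻¹

noncomputable def harmonicAtom (v : E) (k : ℕ) : E := (2 * ((k : ℝ) + 1))⁻¹ • v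

noncomputable def harmonicAtomMeasure [MeasurableSpace E] (v : E) : Measure E :=
  Measure.sum fun k => ENNReal.ofReal (harmonicWeight k) • Measure.dirac (harmonicAtom v k)

lemma harmonicWeight_nonneg (k : ℕ) : 0 ≤ harmonicWeight k := by
  unfold harmonicWeight; positivity

lemma hasSum_harmonicWeight : HasSum harmonicWeight 1 := by
  rw [hasSum_iff_tendsto_nat_of_nonneg harmonicWeight_nonneg]
  have hpartial (n : ℕ) : ∑ k ∈ Finset.range n, harmonicWeight k = 1 - 1 / ((n : ℝ) + 1) := by
    have htel (k : ℕ) : harmonicWeight k = 1 / ((k : ℝ) + 1) - 1 / (((k + 1 : ℕ) : ℝ) + 1) := by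
      unfold harmonicWeight; push_cast; field_simp; ring
    simp_rw [htel]
    rw [Finset.sum_range_sub' (fun k : ℕ => 1 / ((k : ℝ) + 1))]
    norm_num
  simp only [hpartial]
  simpa using tendsto_const_nhds.sub (tendsto_one_div_add_atTop_nhds_zero_nat (𝕜 := ℝ))

lemma inv_le_harmonicWeight {N k : ℕ} (hk : k < N) : (2 * (N : ℝ) ^ 2)⁻¹ ≤ harmonicWeight k := by
  have hkN : (k : ℝ) + 1 ≤ N := by exact_mod_cast hk
  exact inv_anti₀ (by positivity) (by nlinarith)

lemma norm_harmonicAtom {v : E} (hv : ‖v‖ = 1) (k : ℕ) : ‖harmonicAtom v k‖ ≤ 1 / 2 := by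
  rw [harmonicAtom, norm_smul, hv, mul_one, Real.norm_of_nonneg (by positivity)]
  rw [inv_le_comm₀ (by positivity) (by norm_num)]
  linarith [(Nat.cast_nonneg k : (0 : ℝ) ≤ k)]

lemma inv_le_dist_harmonicAtom {v : E} (hv : ‖v‖ = 1) {N j k : ℕ} (hj : j < N) (hk : k < N)
    (hjk : j ≠ k) : (2 * (N : ℝ) ^ 2)⁻¹ ≤ dist (harmonicAtom v j) (harmonicAtom v k) := by
  have hjN : (j : ℝ) + 1 ≤ N := by exact_mod_cast hj
  have hkN : (k : ℝ) + 1 ≤ N := by exact_mod_cast hk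
  have hgap : 1 ≤ |(k : ℝ) - j| := by
    exact_mod_cast Int.one_le_abs (sub_ne_zero.2 (by exact_mod_cast hjk.symm : (k : ℤ) ≠ j))
  have hdiff : (2 * ((j : ℝ) + 1))⁻¹ - (2 * ((k : ℝ) + 1))⁻¹
      = ((k : ℝ) - j) / (2 * (((j : ℝ) + 1) * ((k : ℝ) + 1))) := by
    field_simp; ring
  have hden : 0 < 2 * (((j : ℝ) + 1) * ((k : ℝ) + 1)) := by positivity
  rw [dist_eq_norm, harmonicAtom, harmonicAtom, ← sub_smul, norm_smul, hv, mul_one,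
    Real.norm_eq_abs, hdiff, abs_div, abs_of_pos hden]
  calc (2 * (N : ℝ) ^ 2)⁻¹ ≤ 1 / (2 * (((j : ℝ) + 1) * ((k : ℝ) + 1))) := by
        rw [one_div]; gcongr; nlinarith
    _ ≤ |(k : ℝ) - j| / (2 * (((j : ℝ) + 1) * ((k : ℝ) + 1))) := by gcongr

lemma harmonicAtom_injective {v : E} (hv : v ≠ 0) : Function.Injective (harmonicAtom v) := by
  intro j k hjk
  have := smul_left_injective ℝ hv hjk
  simp only [inv_inj, mul_right_inj' (two_ne_zero' ℝ), add_left_inj, Nat.cast_inj] at this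
  exact this

variable [MeasurableSpace E]

instance (v : E) : IsProbabilityMeasure (harmonicAtomMeasure v) := by
  constructor
  simp only [harmonicAtomMeasure, Measure.sum_apply _ MeasurableSet.univ, Measure.smul_apply,
    measure_univ, smul_eq_mul, mul_one]
  rw [← ENNReal.ofReal_tsum_of_nonneg harmonicWeight_nonneg hasSum_harmonicWeight.summable,
    hasSum_harmonicWeight.tsum_eq, ENNReal.ofReal_one]

lemma harmonicWeight_le_measureReal_singleton (v : E) (k : ℕ) :
    harmonicWeight k ≤ (harmonicAtomMeasure v).real {harmonicAtom v k} := by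
  refine (ENNReal.ofReal_le_iff_le_toReal (measure_ne_top _ _)).1 ?_
  calc ENNReal.ofReal (harmonicWeight k)
      = (ENNReal.ofReal (harmonicWeight k) • Measure.dirac (harmonicAtom v k))
          {harmonicAtom v k} := by simp
    _ ≤ harmonicAtomMeasure v {harmonicAtom v k} := Measure.le_sum _ k _

lemma ae_mem_range_harmonicAtom [MeasurableSingletonClass E] (v : E) :
    ∀ᵐ x ∂harmonicAtomMeasure v, x ∈ Set.range (harmonicAtom v) := by
  have hmeas : MeasurableSet (Set.range (harmonicAtom v))ᶜ :=
    (Set.countable_range _).measurableSet.compl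
  change harmonicAtomMeasure v (Set.range _)ᶜ = 0
  simp [harmonicAtomMeasure, Measure.sum_apply _ hmeas, Measure.dirac_apply' _ hmeas]

lemma ae_mem_closedBall_harmonicAtom [MeasurableSingletonClass E] {v : E} (hv : ‖v‖ = 1) :
    ∀ᵐ x ∂harmonicAtomMeasure v, x ∈ closedBall (0 : E) (1 / 2) :=
  (ae_mem_range_harmonicAtom v).mono fun _ ⟨k, hk⟩ =>
    hk ▸ mem_closedBall_zero_iff.2 (norm_harmonicAtom hv k)

lemma packingDimMeasure_harmonicAtomMeasure [MeasurableSingletonClass E] (v : E) :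
    packingDimMeasure (harmonicAtomMeasure v) = 0 := by
  have hmeas := (Set.countable_range (harmonicAtom v)).measurableSet
  refine le_zero_iff.1 (sInf_le ⟨_, hmeas, ?_, (Set.countable_range _).packingDim_eq_zero.symm⟩)
  exact (prob_compl_eq_zero_iff hmeas).1 (ae_mem_range_harmonicAtom v)

lemma exists_separated_harmonicAtoms {v : E} (hv : ‖v‖ = 1) (n : ℕ) :
    ∃ S : Finset E, #S = 2 * n ∧
      (S : Set E).Pairwise (fun x y => 2 * (16 * (n : ℝ) ^ 2)⁻¹ ≤ dist x y) ∧
      ∀ y ∈ S, (8 * (n : ℝ) ^ 2)⁻¹ ≤ (harmonicAtomMeasure v).real {y} := by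
  classical
  have hinj : Set.InjOn (harmonicAtom v) (Finset.range (2 * n)) :=
    (harmonicAtom_injective (norm_ne_zero_iff.1 (by rw [hv]; exact one_ne_zero))).injOn
  have hm : (8 * (n : ℝ) ^ 2)⁻¹ = (2 * ((2 * n : ℕ) : ℝ) ^ 2)⁻¹ := by push_cast; ring
  refine ⟨(Finset.range (2 * n)).image (harmonicAtom v), ?_, ?_, ?_⟩
  · rw [Finset.card_image_of_injOn hinj, Finset.card_range]
  · rw [Finset.coe_image, hinj.pairwise_image]
    intro j hj k hk hjk
    calc 2 * (16 * (n : ℝ) ^ 2)⁻¹ = (2 * ((2 * n : ℕ) : ℝ) ^ 2)⁻¹ := by rw [← hm]; ring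
      _ ≤ _ := inv_le_dist_harmonicAtom hv (Finset.mem_range.1 hj) (Finset.mem_range.1 hk) hjk
  · simp only [Finset.forall_mem_image, Finset.mem_range]
    intro k hk
    rw [hm]
    exact (inv_le_harmonicWeight hk).trans (harmonicWeight_le_measureReal_singleton v k)

lemma le_quantError_harmonicAtomMeasure [OpensMeasurableSpace E] {v : E} (hv : ‖v‖ = 1) {r : ℝ}
    (hr : 1 ≤ r) {n : ℕ} (hn : 1 ≤ n) :
    (128 * (n : ℝ) ^ 3)⁻¹ ≤ quantError (harmonicAtomMeasure v) r n := by
  have hr0 : 0 < r := by linarith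
  have hN : (1 : ℝ) ≤ n := by exact_mod_cast hn
  obtain ⟨S, hS, hsep, hmass⟩ := exists_separated_harmonicAtoms hv n
  have hint (α : Finset E) :
      Integrable (fun x => infDist x (α : Set E) ^ r) (harmonicAtomMeasure v) :=
    integrable_infDist_rpow_of_ae_mem_closedBall (ae_mem_closedBall_harmonicAtom hv) hr0.le α
  refine le_trans ?_
    (le_quantError_of_separated hr0 hint hn hS.ge (by positivity) (by positivity) hsep hmass)
  rw [Real.mul_rpow (by positivity) (by positivity), ← Real.rpow_mul (by positivity),
    mul_one_div_cancel hr0.ne', Real.rpow_one]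
  have hroot : (8 * (n : ℝ))⁻¹ ≤ ((n : ℝ) * (8 * (n : ℝ) ^ 2)⁻¹) ^ (1 / r) := by
    have h8n : (n : ℝ) * (8 * (n : ℝ) ^ 2)⁻¹ = (8 * (n : ℝ))⁻¹ := by field_simp
    rw [h8n]
    conv_lhs => rw [← Real.rpow_one (8 * (n : ℝ))⁻¹]
    exact Real.rpow_le_rpow_of_exponent_ge (by positivity)
      (inv_le_one_of_one_le₀ (by linarith)) ((div_le_one hr0).2 hr)
  calc (128 * (n : ℝ) ^ 3)⁻¹ = (8 * (n : ℝ))⁻¹ * (16 * (n : ℝ) ^ 2)⁻¹ := by field_simp; ring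
    _ ≤ _ := by gcongr

lemma quarter_le_upperQuantDimE_harmonicAtomMeasure [OpensMeasurableSpace E] {v : E}
    (hv : ‖v‖ = 1) {r : ℝ} (hr : 1 ≤ r) :
    ENNReal.ofReal 4⁻¹ ≤ upperQuantDimE (harmonicAtomMeasure v) r := by
  refine inv_le_upperQuantDimE (by norm_num) ?_
  filter_upwards [eventually_ge_atTop 128] with n hn
  have hn1 : 1 ≤ n := by omega
  have hN : (128 : ℝ) ≤ n := by exact_mod_cast hn
  refine ⟨le_trans ?_ (le_quantError_harmonicAtomMeasure hv hr hn1),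
    (quantError_le_of_ae_mem_closedBall (by linarith) (by norm_num)
      (ae_mem_closedBall_harmonicAtom hv) hn1).trans_lt (by norm_num)⟩
  rw [Real.rpow_neg (Nat.cast_nonneg n), show (4 : ℝ) = ((4 : ℕ) : ℝ) by norm_num,
    Real.rpow_natCast]
  exact inv_anti₀ (by positivity) (by nlinarith [pow_pos (by linarith : (0 : ℝ) < n) 3])

end HarmonicAtoms

/-- for every `r ∈ [1,∞)` (and `q ≥ 1`) there exists a compactly supported
Borel probability measure `μ` on `ℝ^q` whose upper quantization dimension of order `r`
differs from the packing dimension of `μ`. -/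
theorem exists_upperQuantDim_ne_packingDimMeasure (q : ℕ) (hq : 0 < q) (r : ℝ) (hr : 1 ≤ r) :
    ∃ μ : Measure (EuclideanSpace ℝ (Fin q)), IsProbabilityMeasure μ ∧
      (∃ K : Set (EuclideanSpace ℝ (Fin q)), IsCompact K ∧ μ Kᶜ = 0) ∧
      upperQuantDimE μ r ≠ packingDimMeasure μ := by
  set v : EuclideanSpace ℝ (Fin q) := EuclideanSpace.single ⟨0, hq⟩ 1
  have hv : ‖v‖ = 1 := by simp [v]
  refine ⟨harmonicAtomMeasure v, inferInstance,
    ⟨closedBall 0 (1 / 2), isCompact_closedBall _ _, ae_mem_closedBall_harmonicAtom hv⟩, ?_⟩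
  rw [packingDimMeasure_harmonicAtomMeasure]
  exact ((ENNReal.ofReal_pos.2 (by norm_num)).trans_le
    (quarter_le_upperQuantDimE_harmonicAtomMeasure hv hr)).ne'
end
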